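/- Let {F_1,...,F_ℓ} be a fundamental partition of a finite family of vectors Φ = (φ_1,...,φ_M) in a vector space V. Pick any vector φ_ℓ ∈ F_ℓ, let S_{ℓ-1} ⊆ F_{ℓ-1} be a smallest subset such that φ_ℓ ∈ span(S_{ℓ-1}), fix j ≤ ℓ-1, and let S_j be a smallest subset of F_j such that span(S_{ℓ-1}) ⊆ span(S_j). Then span(S_j) ⊆ span(F_i) for every i = 1,...,ℓ-1. -/

import Mathlib

/-- The sequence of part sizes of a partition `F : Fin ℓ → Finset (Fin M)`,
padded with zeros. -/
def PartSizes {M ℓ : ℕ} (F : Fin ℓ → Finset (Fin M)) : ℕ → ℕ :=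
  fun n => if h : n < ℓ then (F ⟨n, h⟩).card else 0

/-- Lexicographic order on sequences of naturals: `a ≤ₗₑₓ b`. -/
def LexLE (a b : ℕ → ℕ) : Prop :=
  a = b ∨ ∃ n, (∀ m < n, a m = b m) ∧ a n < b n

/-- `F : Fin ℓ → Finset (Fin M)` is an ordered partition of the index set `Ω`
into sets indexing linearly independent subfamilies of `φ`: the parts are
nonempty, pairwise disjoint, cover `Ω`, each part indexes a linearly
independent subfamily, and the part sizes are non-increasing. -/
def IsOrderedLIPartitionOn (K : Type*) {V : Type*} [Field K] [AddCommGroup V] [Module K V]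
    {M ℓ : ℕ} (φ : Fin M → V) (Ω : Finset (Fin M)) (F : Fin ℓ → Finset (Fin M)) : Prop :=
  (∀ i, (F i).Nonempty) ∧
  (∀ i j, i ≠ j → Disjoint (F i) (F j)) ∧
  (Finset.univ.biUnion F = Ω) ∧
  (∀ i, LinearIndependent K (fun x : {y : Fin M // y ∈ F i} => φ x.1)) ∧
  (∀ i j : Fin ℓ, i ≤ j → (F j).card ≤ (F i).card)

/-- A fundamental partition of the subfamily of `φ` indexed by `Ω`: an ordered
partition into linearly independent sets whose size sequence is
lexicographically maximal among all such ordered partitions. -/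
def IsFundamentalOn (K : Type*) {V : Type*} [Field K] [AddCommGroup V] [Module K V]
    {M ℓ : ℕ} (φ : Fin M → V) (Ω : Finset (Fin M)) (F : Fin ℓ → Finset (Fin M)) : Prop :=
  IsOrderedLIPartitionOn K φ Ω F ∧
  ∀ (k : ℕ) (P : Fin k → Finset (Fin M)),
    IsOrderedLIPartitionOn K φ Ω P → LexLE (PartSizes P) (PartSizes F)

/-!
The spans of the parts of a fundamental partition decrease: if `φ x` with `x ∈ F_j` were not in
`span F_i` for some `i < j`, then moving `x` from `F_j` to `F_i` (after permuting parts of equal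
size so that `F_i` is the first and `F_j` the last part of its size) would give an ordered
partition into independent sets with a lexicographically larger size sequence.

It therefore suffices to show `span S_j ⊆ span F_{ℓ-1}`. If `φ x ∉ span F_{ℓ-1}` for some
`x ∈ S_j`, minimality of `S_j` yields `s ∈ S_{ℓ-1}` with `φ s ∉ span (F_j \ {x})`, and swapping
`x` and `s` between `F_j` and `F_{ℓ-1}` gives another fundamental partition. By the chain property
its part `(F_{ℓ-1} \ {s}) ∪ {x}` spans `φ m`, while minimality of `S_{ℓ-1}` forbids
`φ m ∈ span (F_{ℓ-1} \ {s})`; the exchange lemma then puts `φ x` into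
`span ((F_{ℓ-1} \ {s}) ∪ {m}) ⊆ span F_{ℓ-1}`.
-/

theorem LinearIndepOn.inf_span_image_le {R M ι : Type*} [Semiring R] [AddCommMonoid M]
    [Module R M] {v : ι → M} {s t u : Set ι} (hu : LinearIndepOn R v u) (hs : s ⊆ u)
    (ht : t ⊆ u) :
    Submodule.span R (v '' s) ⊓ Submodule.span R (v '' t) ≤ Submodule.span R (v '' (s ∩ t)) := by
  rintro w ⟨hws, hwt⟩
  obtain ⟨f, hf, rfl⟩ := (Finsupp.mem_span_image_iff_linearCombination R).mp hws
  obtain ⟨g, hg, hgf⟩ := (Finsupp.mem_span_image_iff_linearCombination R).mp hwt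
  obtain rfl := linearIndepOn_iffₛ.mp hu g (Finsupp.supported_mono ht hg) f
    (Finsupp.supported_mono hs hf) hgf
  exact (Finsupp.mem_span_image_iff_linearCombination R).mpr
    ⟨g, (Finsupp.supported_inter (M := R) (R := R) s t).symm ▸ ⟨hf, hg⟩, rfl⟩

theorem not_le_span_image_erase_of_card_minimal {R M ι : Type*} [Semiring R] [AddCommMonoid M]
    [Module R M] [DecidableEq ι] {v : ι → M} {S T : Finset ι} {W : Submodule R M}
    (hT : LinearIndepOn R v (T : Set ι)) (hST : S ⊆ T) (hW : W ≤ Submodule.span R (v '' S))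
    (hmin : ∀ S' ⊆ T, W ≤ Submodule.span R (v '' S') → S.card ≤ S'.card) {x : ι} (hx : x ∈ S) :
    ¬ W ≤ Submodule.span R (v '' ↑(T.erase x)) := by
  intro hWx
  have hW' : W ≤ Submodule.span R (v '' ↑(S.erase x)) := by
    have hinter : (↑(T.erase x) ∩ ↑S : Set ι) = ↑(S.erase x) := by
      ext y
      simp only [Set.mem_inter_iff, Finset.mem_coe, Finset.mem_erase]
      exact ⟨fun ⟨⟨hyx, _⟩, hyS⟩ => ⟨hyx, hyS⟩, fun ⟨hyx, hyS⟩ => ⟨⟨hyx, hST hyS⟩, hyS⟩⟩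
    calc W ≤ _ := le_inf hWx hW
      _ ≤ _ := hT.inf_span_image_le (by simp) (by simpa using hST)
      _ = _ := by rw [hinter]
  have := hmin _ ((S.erase_subset x).trans hST) hW'
  rw [Finset.card_erase_of_mem hx] at this
  have := Finset.card_pos.mpr ⟨x, hx⟩
  omega

theorem LexLE.le_of_forall_lt_eq {a b : ℕ → ℕ} (h : LexLE a b) {n : ℕ}
    (heq : ∀ m < n, a m = b m) : a n ≤ b n := by
  rcases h with rfl | ⟨n', heq', hlt⟩
  · exact le_rfl
  rcases lt_trichotomy n n' with h | rfl | h
  · exact (heq' n h).le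
  · exact hlt.le
  · exact absurd (heq n' h) hlt.ne

theorem Finset.map_swap_of_mem_of_notMem {α : Type*} [DecidableEq α] {s : Finset α} {x y : α}
    (hx : x ∈ s) (hy : y ∉ s) : s.map (Equiv.swap x y).toEmbedding = insert y (s.erase x) := by
  ext v
  rw [Finset.mem_map_equiv, Equiv.symm_swap, Finset.mem_insert, Finset.mem_erase,
    Equiv.swap_apply_def]
  split_ifs with hvx hvy
  · subst hvx; simp [hy, hx, ne_of_mem_of_not_mem hx hy]
  · simp [hvy, hx]
  · simp [hvx, hvy]

theorem Finset.map_swap_of_notMem_of_notMem {α : Type*} [DecidableEq α] {s : Finset α}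
    {x y : α} (hx : x ∉ s) (hy : y ∉ s) : s.map (Equiv.swap x y).toEmbedding = s := by
  ext v
  rw [Finset.mem_map_equiv, Equiv.symm_swap, Equiv.swap_apply_def]
  split_ifs with hvx hvy
  · subst hvx; simp [hy, hx]
  · subst hvy; simp [hy, hx]
  · rfl

theorem Finset.map_swap_of_mem_of_mem {α : Type*} [DecidableEq α] {s : Finset α}
    {x y : α} (hx : x ∈ s) (hy : y ∈ s) : s.map (Equiv.swap x y).toEmbedding = s := by
  ext v
  rw [Finset.mem_map_equiv, Equiv.symm_swap, Equiv.swap_apply_def]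
  split_ifs with hvx hvy
  · subst hvx; simp [hy, hx]
  · subst hvy; simp [hy, hx]
  · rfl

theorem partSizes_of_lt {M ℓ : ℕ} (F : Fin ℓ → Finset (Fin M)) {n : ℕ} (h : n < ℓ) :
    PartSizes F n = (F ⟨n, h⟩).card :=
  dif_pos h

theorem partSizes_eq_of_card_eq {M ℓ : ℕ} {F G : Fin ℓ → Finset (Fin M)}
    (h : ∀ c, (G c).card = (F c).card) : PartSizes G = PartSizes F := by
  funext n
  simp only [PartSizes, h]

section FundamentalPartition

variable {K V : Type*} [Field K] [AddCommGroup V] [Module K V] {M ℓ : ℕ} {φ : Fin M → V}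
  {Ω : Finset (Fin M)} {F : Fin ℓ → Finset (Fin M)}

theorem IsFundamentalOn.of_partSizes_eq {k : ℕ} {G : Fin k → Finset (Fin M)}
    (hF : IsFundamentalOn K φ Ω F) (hG : IsOrderedLIPartitionOn K φ Ω G)
    (hsizes : PartSizes G = PartSizes F) :
    IsFundamentalOn K φ Ω G :=
  ⟨hG, fun k P hP => hsizes ▸ hF.2 k P hP⟩

theorem IsFundamentalOn.comp_perm (hF : IsFundamentalOn K φ Ω F) (σ : Equiv.Perm (Fin ℓ))
    (hσ : ∀ c, (F (σ c)).card = (F c).card) : IsFundamentalOn K φ Ω (F ∘ σ) := by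
  obtain ⟨hne, hdisj, hcov, hli, hanti⟩ := hF.1
  refine hF.of_partSizes_eq ⟨fun c => hne (σ c), fun a b hab => hdisj _ _ (σ.injective.ne hab),
    ?_, fun c => hli (σ c), fun a b hab => ?_⟩ (partSizes_eq_of_card_eq hσ)
  · rw [← hcov]
    ext v
    simp only [Finset.mem_biUnion, Finset.mem_univ, true_and, Function.comp_apply]
    exact σ.surjective.exists (p := fun c => v ∈ F c) |>.symm
  · simp only [Function.comp_apply, hσ]
    exact hanti a b hab

theorem exists_isOrderedLIPartitionOn_partSizes_eq : ∀ {n : ℕ} (G : Fin n → Finset (Fin M)),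
    (∀ a b, a ≠ b → Disjoint (G a) (G b)) → Finset.univ.biUnion G = Ω →
    (∀ c, LinearIndependent K (fun x : {y : Fin M // y ∈ G c} => φ x.1)) →
    Antitone (fun c => (G c).card) →
    ∃ (k : ℕ) (P : Fin k → Finset (Fin M)),
      IsOrderedLIPartitionOn K φ Ω P ∧ PartSizes P = PartSizes G
  | 0, G, hdisj, hcov, hli, hanti =>
    ⟨0, G, ⟨fun c => c.elim0, hdisj, hcov, hli, fun _ _ h => hanti h⟩, rfl⟩
  | n + 1, G, hdisj, hcov, hli, hanti => by
    by_cases hlast : (G (Fin.last n)).Nonempty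
    · refine ⟨n + 1, G, ⟨fun c => ?_, hdisj, hcov, hli, fun _ _ h => hanti h⟩, rfl⟩
      rw [← Finset.card_pos] at hlast ⊢
      exact hlast.trans_le (hanti (Fin.le_last c))
    rw [Finset.not_nonempty_iff_eq_empty] at hlast
    obtain ⟨k, P, hP, hsizes⟩ := exists_isOrderedLIPartitionOn_partSizes_eq (G ∘ Fin.castSucc)
      (fun a b hab => hdisj _ _ (Fin.castSucc_injective n |>.ne hab))
      (by rw [← hcov]; ext v; simp [Fin.exists_fin_succ', hlast])
      (fun c => hli _) (fun a b hab => hanti (Fin.castSucc_le_castSucc_iff.mpr hab))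
    refine ⟨k, P, hP, hsizes.trans ?_⟩
    funext i
    simp only [PartSizes, Function.comp_apply]
    split_ifs with h1 h2 h2
    · rfl
    · omega
    · rw [show (⟨i, h2⟩ : Fin (n + 1)) = Fin.last n from Fin.ext (by simp; omega), hlast]
      rfl
    · rfl

theorem IsOrderedLIPartitionOn.exists_move (hF : IsOrderedLIPartitionOn K φ Ω F) {i j : Fin ℓ}
    (hij : i ≠ j) {x : Fin M} (hx : x ∈ F j) (hxi : φ x ∉ Submodule.span K (φ '' ↑(F i))) :
    ∃ G : Fin ℓ → Finset (Fin M), (∀ a b, a ≠ b → Disjoint (G a) (G b)) ∧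
      Finset.univ.biUnion G = Ω ∧
      (∀ c, LinearIndependent K (fun y : {y : Fin M // y ∈ G c} => φ y.1)) ∧
      (G i).card = (F i).card + 1 ∧ (G j).card + 1 = (F j).card ∧
      ∀ c, c ≠ i → c ≠ j → G c = F c := by
  obtain ⟨-, hdisj, hcov, hli, -⟩ := hF
  have hxc : ∀ c, c ≠ j → x ∉ F c := fun c hc hxc =>
    Finset.disjoint_left.mp (hdisj c j hc) hxc hx
  have hli' : ∀ c, LinearIndepOn K φ ↑(F c) := hli
  set G := Function.update (fun c => (F c).erase x) i (insert x (F i))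
  have hGi : G i = insert x (F i) := Function.update_self ..
  have hGc : ∀ c, c ≠ i → G c = (F c).erase x := fun c hc => Function.update_of_ne hc ..
  have hmem : ∀ c v, v ∈ G c ↔ if v = x then c = i else v ∈ F c := by
    intro c v
    by_cases hc : c = i
    · subst hc
      split_ifs with hv <;> simp [G, hv]
    · split_ifs with hv <;> simp [G, hc, hv]
  refine ⟨G, fun a b hab => Finset.disjoint_left.mpr fun v ha hb => ?_, ?_, fun c => ?_, ?_, ?_,
    fun c hci hcj => ?_⟩
  · rw [hmem] at ha hb
    split_ifs at ha hb
    · exact hab (ha.trans hb.symm)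
    · exact Finset.disjoint_left.mp (hdisj a b hab) ha hb
  · rw [← hcov]
    ext v
    simp only [Finset.mem_biUnion, Finset.mem_univ, true_and, hmem]
    split_ifs with hv
    · subst hv
      exact ⟨fun _ => ⟨j, hx⟩, fun _ => ⟨i, rfl⟩⟩
    · rfl
  · by_cases hc : c = i
    · subst hc
      show LinearIndepOn K φ ↑(G c)
      rw [hGi, Finset.coe_insert]
      exact (hli' c).insert hxi
    · show LinearIndepOn K φ ↑(G c)
      rw [hGc c hc]
      exact (hli' c).mono (by simp)
  · rw [hGi, Finset.card_insert_of_notMem (hxc i hij)]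
  · rw [hGc j hij.symm, Finset.card_erase_add_one hx]
  · rw [hGc c hci, Finset.erase_eq_of_notMem (hxc c hcj)]

theorem IsFundamentalOn.exists_exchange (hF : IsFundamentalOn K φ Ω F) {a b : Fin ℓ}
    (hab : a ≠ b) {x y : Fin M} (hx : x ∈ F a) (hy : y ∈ F b)
    (hxb : φ x ∉ Submodule.span K (φ '' ↑((F b).erase y)))
    (hya : φ y ∉ Submodule.span K (φ '' ↑((F a).erase x))) :
    ∃ G : Fin ℓ → Finset (Fin M), IsFundamentalOn K φ Ω G ∧
      G a = insert y ((F a).erase x) ∧ G b = insert x ((F b).erase y) ∧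
      ∀ c, c ≠ a → c ≠ b → G c = F c := by
  obtain ⟨hne, hdisj, hcov, hli, hanti⟩ := hF.1
  have hli' : ∀ c, LinearIndepOn K φ ↑(F c) := hli
  have hnot : ∀ {v c d}, c ≠ d → v ∈ F d → v ∉ F c := fun hcd hvd hvc =>
    Finset.disjoint_left.mp (hdisj _ _ hcd) hvc hvd
  have hGa : (F a).map (Equiv.swap x y).toEmbedding = insert y ((F a).erase x) :=
    Finset.map_swap_of_mem_of_notMem hx (hnot hab hy)
  have hGb : (F b).map (Equiv.swap x y).toEmbedding = insert x ((F b).erase y) := by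
    rw [Equiv.swap_comm]
    exact Finset.map_swap_of_mem_of_notMem hy (hnot hab.symm hx)
  have hGc : ∀ c, c ≠ a → c ≠ b → (F c).map (Equiv.swap x y).toEmbedding = F c := fun c hca hcb =>
    Finset.map_swap_of_notMem_of_notMem (hnot hca hx) (hnot hcb hy)
  refine ⟨fun c => (F c).map (Equiv.swap x y).toEmbedding, hF.of_partSizes_eq ⟨fun c => (hne c).map,
    fun c d hcd => Finset.disjoint_map _ |>.mpr (hdisj c d hcd), ?_, fun c => ?_, ?_⟩
    (partSizes_eq_of_card_eq fun c => Finset.card_map _), hGa, hGb, hGc⟩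
  · have hxΩ : x ∈ Ω := hcov ▸ Finset.mem_biUnion.mpr ⟨a, Finset.mem_univ _, hx⟩
    have hyΩ : y ∈ Ω := hcov ▸ Finset.mem_biUnion.mpr ⟨b, Finset.mem_univ _, hy⟩
    ext v
    rw [← Finset.map_swap_of_mem_of_mem hxΩ hyΩ, Finset.mem_map_equiv, ← hcov]
    simp [Finset.mem_map_equiv]
  · show LinearIndepOn K φ ↑((F c).map (Equiv.swap x y).toEmbedding)
    by_cases hca : c = a
    · subst hca
      rw [hGa, Finset.coe_insert]
      exact ((hli' c).mono (by simp)).insert hya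
    by_cases hcb : c = b
    · subst hcb
      rw [hGb, Finset.coe_insert]
      exact ((hli' c).mono (by simp)).insert hxb
    rw [hGc c hca hcb]
    exact hli c
  · intro c d hcd
    simp only [Finset.card_map]
    exact hanti c d hcd

theorem IsFundamentalOn.span_le_span_of_first_last (hF : IsFundamentalOn K φ Ω F) {i j : Fin ℓ}
    (hij : i < j) (hi : ∀ c < i, (F i).card < (F c).card)
    (hj : ∀ c, j < c → (F c).card < (F j).card) :
    Submodule.span K (φ '' ↑(F j)) ≤ Submodule.span K (φ '' ↑(F i)) := by
  rw [Submodule.span_le]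
  rintro _ ⟨x, hx, rfl⟩
  by_contra hxi
  obtain ⟨G, hdisj, hcov, hli, hGi, hGj, hGc⟩ := hF.1.exists_move hij.ne hx hxi
  have hGanti : Antitone fun c => (G c).card := by
    intro c d hcd
    have hsize : ∀ c, (G c).card + (if c = j then 1 else 0) =
        (F c).card + (if c = i then 1 else 0) := by
      intro c
      by_cases hci : c = i
      · subst hci; simp [hGi, hij.ne]
      by_cases hcj : c = j
      · subst hcj; simp [hGj, hci]
      · simp [hGc c hci hcj, hci, hcj]
    have hd : d = i → c ≠ i → (F i).card < (F c).card := fun hd hc =>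
      hi c (lt_of_le_of_ne (hd ▸ hcd) hc)
    have hc : c = j → d ≠ j → (F d).card < (F j).card := fun hc hd =>
      hj d (lt_of_le_of_ne (hc ▸ hcd) (Ne.symm hd))
    have := hsize c
    have := hsize d
    have := hF.1.2.2.2.2 c d hcd
    have := hij.ne
    show (G d).card ≤ (G c).card
    split_ifs at * <;> subst_vars <;> omega
  obtain ⟨k, P, hP, hsizes⟩ := exists_isOrderedLIPartitionOn_partSizes_eq G hdisj hcov hli hGanti
  have hlex := (hsizes ▸ hF.2 k P hP).le_of_forall_lt_eq (n := i) fun m hm => by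
    have hmℓ : m < ℓ := hm.trans i.2
    rw [partSizes_of_lt G hmℓ, partSizes_of_lt F hmℓ,
      hGc _ (Fin.ne_of_lt hm) (Fin.ne_of_lt (lt_trans hm hij))]
  rw [partSizes_of_lt G i.2, partSizes_of_lt F i.2, Fin.eta, hGi] at hlex
  omega

theorem IsFundamentalOn.span_antitone (hF : IsFundamentalOn K φ Ω F) {i j : Fin ℓ}
    (hij : i ≤ j) : Submodule.span K (φ '' ↑(F j)) ≤ Submodule.span K (φ '' ↑(F i)) := by
  rcases hij.eq_or_lt with rfl | hij
  · exact le_rfl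
  have hanti := hF.1.2.2.2.2
  obtain ⟨i', hi'mem, hi'min⟩ :=
    (Finset.univ.filter fun c => (F c).card = (F i).card).exists_min_image id ⟨i, by simp⟩
  obtain ⟨j', hj'mem, hj'max⟩ :=
    (Finset.univ.filter fun c => (F c).card = (F j).card).exists_max_image id ⟨j, by simp⟩
  simp only [Finset.mem_filter, Finset.mem_univ, true_and, id] at hi'mem hj'mem hi'min hj'max
  have hi'i : i' ≤ i := hi'min i rfl
  have hjj' : j ≤ j' := hj'max j rfl
  have hswap : ∀ a b, (F a).card = (F b).card → ∀ c, (F (Equiv.swap a b c)).card = (F c).card := by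
    intro a b hab c
    rcases eq_or_ne c a with rfl | hca
    · simp [hab]
    rcases eq_or_ne c b with rfl | hcb
    · simp [hab]
    rw [Equiv.swap_apply_of_ne_of_ne hca hcb]
  set σ := Equiv.swap i' i * Equiv.swap j j'
  have hσ : ∀ c, (F (σ c)).card = (F c).card := fun c => by
    rw [Equiv.Perm.mul_apply, hswap _ _ hi'mem, hswap _ _ hj'mem.symm]
  have hσi' : σ i' = i := by
    rw [Equiv.Perm.mul_apply, Equiv.swap_apply_of_ne_of_ne (hi'i.trans_lt hij).ne
      (hi'i.trans_lt (hij.trans_le hjj')).ne, Equiv.swap_apply_left]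
  have hσj' : σ j' = j := by
    rw [Equiv.Perm.mul_apply, Equiv.swap_apply_right, Equiv.swap_apply_of_ne_of_ne
      (hi'i.trans_lt hij).ne' hij.ne']
  have := (hF.comp_perm σ hσ).span_le_span_of_first_last (i := i') (j := j')
    (hi'i.trans_lt (hij.trans_le hjj')) (fun c hc => ?_) (fun c hc => ?_)
  · simpa only [Function.comp_apply, hσi', hσj'] using this
  · simp only [Function.comp_apply, hσ]
    exact lt_of_le_of_ne (hanti c i' hc.le) fun h => (hi'min c (h.symm.trans hi'mem)).not_gt hc
  · simp only [Function.comp_apply, hσ]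
    exact lt_of_le_of_ne (hanti j' c hc.le) fun h => (hj'max c (h.trans hj'mem)).not_gt hc

theorem IsFundamentalOn.span_le_of_card_minimal (hF : IsFundamentalOn K φ Ω F) {b c j : Fin ℓ}
    (hbc : b < c) (hjc : j ≠ c) {m : Fin M} (hm : m ∈ F c) {S₁ : Finset (Fin M)}
    (hS₁sub : S₁ ⊆ F b)
    (hS₁mem : φ m ∈ Submodule.span K (φ '' ↑S₁))
    (hS₁min : ∀ S' ⊆ F b, φ m ∈ Submodule.span K (φ '' ↑S') → S₁.card ≤ S'.card)
    {Sj : Finset (Fin M)} (hSjsub : Sj ⊆ F j)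
    (hSjspan : Submodule.span K (φ '' ↑S₁) ≤ Submodule.span K (φ '' ↑Sj))
    (hSjmin : ∀ S' ⊆ F j,
      Submodule.span K (φ '' ↑S₁) ≤ Submodule.span K (φ '' ↑S') → Sj.card ≤ S'.card) :
    Submodule.span K (φ '' ↑Sj) ≤ Submodule.span K (φ '' ↑(F b)) := by
  rcases eq_or_ne j b with rfl | hjb
  · exact Submodule.span_mono (Set.image_mono (by exact_mod_cast hSjsub))
  rw [Submodule.span_le]
  rintro _ ⟨x, hx, rfl⟩
  by_contra hxb
  have hli : ∀ a, LinearIndepOn K φ ↑(F a) := hF.1.2.2.2.1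
  obtain ⟨s, hs, hsx⟩ : ∃ s ∈ S₁, φ s ∉ Submodule.span K (φ '' ↑((F j).erase x)) := by
    by_contra! hall
    refine not_le_span_image_erase_of_card_minimal (hli j) hSjsub hSjspan hSjmin hx ?_
    exact Submodule.span_le.mpr (by rintro _ ⟨s, hs, rfl⟩; exact hall s hs)
  have hxb' : φ x ∉ Submodule.span K (φ '' ↑((F b).erase s)) := fun h =>
    hxb (Submodule.span_mono (Set.image_mono (by simp)) h)
  obtain ⟨G, hG, -, hGb, hGc⟩ := hF.exists_exchange hjb (hSjsub hx) (hS₁sub hs) hxb' hsx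
  have hmG : φ m ∈ Submodule.span K (φ '' ↑(G b)) :=
    hG.span_antitone hbc.le
      (Submodule.subset_span ⟨m, by simpa [hGc c hjc.symm hbc.ne'] using hm, rfl⟩)
  rw [hGb, Finset.coe_insert, Set.image_insert_eq] at hmG
  have hmb : φ m ∉ Submodule.span K (φ '' ↑((F b).erase s)) := fun h =>
    not_le_span_image_erase_of_card_minimal (hli b) hS₁sub
      (Submodule.span_singleton_le_iff_mem _ _ |>.mpr hS₁mem)
      (fun S' hS' hmS' => hS₁min S' hS' (Submodule.span_singleton_le_iff_mem _ _ |>.mp hmS')) hs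
      (Submodule.span_singleton_le_iff_mem _ _ |>.mpr h)
  refine hxb (Submodule.span_le.mpr ?_ (mem_span_insert_exchange hmG hmb))
  refine Set.insert_subset
    (Submodule.span_mono (Set.image_mono (by exact_mod_cast hS₁sub)) hS₁mem) ?_
  exact (Set.image_mono (by simp)).trans Submodule.subset_span

end FundamentalPartition

/-- Let `{F_1,…,F_ℓ}` be a fundamental partition of `Φ`, pick `φ_m ∈ F_ℓ`, let
`S₁ ⊆ F_{ℓ-1}` be a smallest subset with `φ_m ∈ span(S₁)`, fix `j ≤ ℓ-1`, and
let `S_j ⊆ F_j` be a smallest subset with `span(S₁) ⊆ span(S_j)`.  Then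
`span(S_j) ⊆ span(F_i)` for all `i = 1,…,ℓ-1`.  (Indices here are 0-based:
`F ⟨ℓ-1,_⟩` is the last part, `F ⟨ℓ-2,_⟩` the second-to-last.) -/
theorem span_of_minimal_subsets_le {K V : Type*} [Field K] [AddCommGroup V] [Module K V]
    {M ℓ : ℕ} (hℓ : 2 ≤ ℓ) (φ : Fin M → V) (F : Fin ℓ → Finset (Fin M))
    (hF : IsFundamentalOn K φ Finset.univ F)
    (m : Fin M) (hm : m ∈ F ⟨ℓ - 1, by omega⟩)
    (S₁ : Finset (Fin M)) (hS₁sub : S₁ ⊆ F ⟨ℓ - 2, by omega⟩)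
    (hS₁mem : φ m ∈ Submodule.span K (φ '' ↑S₁))
    (hS₁min : ∀ S' ⊆ F ⟨ℓ - 2, by omega⟩,
      φ m ∈ Submodule.span K (φ '' ↑S') → S₁.card ≤ S'.card)
    (j : Fin ℓ) (hj : (j : ℕ) ≤ ℓ - 2)
    (Sj : Finset (Fin M)) (hSjsub : Sj ⊆ F j)
    (hSjspan : Submodule.span K (φ '' ↑S₁) ≤ Submodule.span K (φ '' ↑Sj))
    (hSjmin : ∀ S' ⊆ F j,
      Submodule.span K (φ '' ↑S₁) ≤ Submodule.span K (φ '' ↑S') → Sj.card ≤ S'.card) :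
    ∀ i : Fin ℓ, (i : ℕ) ≤ ℓ - 2 →
      Submodule.span K (φ '' ↑Sj) ≤ Submodule.span K (φ '' ↑(F i)) := by
  intro i hi
  have hpenultimate := hF.span_le_of_card_minimal (Fin.mk_lt_mk.mpr (by omega))
    (Fin.ne_of_val_ne (by simp; omega)) hm hS₁sub hS₁mem hS₁min hSjsub hSjspan hSjmin
  exact hpenultimate.trans (hF.span_antitone (Fin.mk_le_mk.mpr hi))
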